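/- The assignments φ(X) = Y⁻¹, φ(Y) = X⁻¹, φ(T) = T extend (uniquely) to a ℂ-algebra anti-automorphism φ of H_{q,t}; that is, φ is a ℂ-linear bijection with φ(1) = 1 and φ(a·b) = φ(b)·φ(a) for all a, b ∈ H_{q,t}. -/

import Mathlib

noncomputable section

/-- Generators of the double affine Hecke algebra of type `A₁`. -/
inductive DGen : Type
  | X | Xi | Y | Yi | T

/-- The defining relations of the double affine Hecke algebra `H_{q,t}` of type `A₁`. -/
inductive DahaRel (q t : ℂ) : FreeAlgebra ℂ DGen → FreeAlgebra ℂ DGen → Prop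
  | XXi : DahaRel q t (FreeAlgebra.ι ℂ DGen.X * FreeAlgebra.ι ℂ DGen.Xi) 1
  | XiX : DahaRel q t (FreeAlgebra.ι ℂ DGen.Xi * FreeAlgebra.ι ℂ DGen.X) 1
  | YYi : DahaRel q t (FreeAlgebra.ι ℂ DGen.Y * FreeAlgebra.ι ℂ DGen.Yi) 1
  | YiY : DahaRel q t (FreeAlgebra.ι ℂ DGen.Yi * FreeAlgebra.ι ℂ DGen.Y) 1
  | TXT : DahaRel q t
      (FreeAlgebra.ι ℂ DGen.T * FreeAlgebra.ι ℂ DGen.X * FreeAlgebra.ι ℂ DGen.T)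
      (FreeAlgebra.ι ℂ DGen.Xi)
  | TYiT : DahaRel q t
      (FreeAlgebra.ι ℂ DGen.T * FreeAlgebra.ι ℂ DGen.Yi * FreeAlgebra.ι ℂ DGen.T)
      (FreeAlgebra.ι ℂ DGen.Y)
  | XY : DahaRel q t (FreeAlgebra.ι ℂ DGen.X * FreeAlgebra.ι ℂ DGen.Y)
      ((q ^ 2) • (FreeAlgebra.ι ℂ DGen.Y * FreeAlgebra.ι ℂ DGen.X *
        FreeAlgebra.ι ℂ DGen.T * FreeAlgebra.ι ℂ DGen.T))
  | hecke : DahaRel q t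
      ((FreeAlgebra.ι ℂ DGen.T - algebraMap ℂ (FreeAlgebra ℂ DGen) t) *
        (FreeAlgebra.ι ℂ DGen.T + algebraMap ℂ (FreeAlgebra ℂ DGen) t⁻¹)) 0

/-- The double affine Hecke algebra `H_{q,t}` of type `A₁`. -/
abbrev DAHA (q t : ℂ) : Type := RingQuot (DahaRel q t)

/-- The generator `X` of `H_{q,t}`. -/
def Xg (q t : ℂ) : DAHA q t := RingQuot.mkAlgHom ℂ (DahaRel q t) (FreeAlgebra.ι ℂ DGen.X)
/-- The generator `X⁻¹` of `H_{q,t}`. -/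
def Xig (q t : ℂ) : DAHA q t := RingQuot.mkAlgHom ℂ (DahaRel q t) (FreeAlgebra.ι ℂ DGen.Xi)
/-- The generator `Y` of `H_{q,t}`. -/
def Yg (q t : ℂ) : DAHA q t := RingQuot.mkAlgHom ℂ (DahaRel q t) (FreeAlgebra.ι ℂ DGen.Y)
/-- The generator `Y⁻¹` of `H_{q,t}`. -/
def Yig (q t : ℂ) : DAHA q t := RingQuot.mkAlgHom ℂ (DahaRel q t) (FreeAlgebra.ι ℂ DGen.Yi)
/-- The generator `T` of `H_{q,t}`. -/
def Tg (q t : ℂ) : DAHA q t := RingQuot.mkAlgHom ℂ (DahaRel q t) (FreeAlgebra.ι ℂ DGen.T)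

/-!
The assignment on generators respects every defining relation once products are reversed:
the inverse relations and the two `T·_·T` relations are swapped among themselves, the Hecke
relation is unchanged because its two factors commute, and the relation `X·Y = q²·Y·X·T²`
goes to `X⁻¹·Y⁻¹ = q²·T²·Y⁻¹·X⁻¹`, which follows from it by conjugating with `Y⁻¹` and `X⁻¹`.
So the assignment defines an algebra map `H_{q,t} → H_{q,t}ᵐᵒᵖ`. Its square fixes `X`, `Y`, `T`
and is therefore the identity, which gives bijectivity; uniqueness holds because a unital
anti-homomorphism is determined by its values on `X`, `Y`, `T`, the images of `X⁻¹`, `Y⁻¹`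
being forced as inverses.
-/

open MulOpposite

def LinearMap.toOpAlgHom {R A B : Type*} [CommSemiring R] [Semiring A] [Semiring B]
    [Algebra R A] [Algebra R B] (φ : A →ₗ[R] B) (h_one : φ 1 = 1)
    (h_mul : ∀ a b, φ (a * b) = φ b * φ a) : A →ₐ[R] Bᵐᵒᵖ :=
  AlgHom.ofLinearMap ((opLinearEquiv R).toLinearMap ∘ₗ φ) (by simp [h_one])
    (fun a b => by simp [h_mul])

@[simp]
lemma LinearMap.toOpAlgHom_apply {R A B : Type*} [CommSemiring R] [Semiring A] [Semiring B]
    [Algebra R A] [Algebra R B] (φ : A →ₗ[R] B) (h_one : φ 1 = 1)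
    (h_mul : ∀ a b, φ (a * b) = φ b * φ a) (a : A) :
    φ.toOpAlgHom h_one h_mul a = op (φ a) :=
  rfl

namespace DAHA

variable {q t : ℂ}

lemma Xg_mul_Xig : Xg q t * Xig q t = 1 := by
  simpa [Xg, Xig] using RingQuot.mkAlgHom_rel ℂ (DahaRel.XXi (q := q) (t := t))

lemma Xig_mul_Xg : Xig q t * Xg q t = 1 := by
  simpa [Xg, Xig] using RingQuot.mkAlgHom_rel ℂ (DahaRel.XiX (q := q) (t := t))

lemma Yg_mul_Yig : Yg q t * Yig q t = 1 := by
  simpa [Yg, Yig] using RingQuot.mkAlgHom_rel ℂ (DahaRel.YYi (q := q) (t := t))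

lemma Yig_mul_Yg : Yig q t * Yg q t = 1 := by
  simpa [Yg, Yig] using RingQuot.mkAlgHom_rel ℂ (DahaRel.YiY (q := q) (t := t))

lemma Tg_mul_Xg_mul_Tg : Tg q t * Xg q t * Tg q t = Xig q t := by
  simpa [Tg, Xg, Xig] using RingQuot.mkAlgHom_rel ℂ (DahaRel.TXT (q := q) (t := t))

lemma Tg_mul_Yig_mul_Tg : Tg q t * Yig q t * Tg q t = Yg q t := by
  simpa [Tg, Yg, Yig] using RingQuot.mkAlgHom_rel ℂ (DahaRel.TYiT (q := q) (t := t))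

lemma Xg_mul_Yg : Xg q t * Yg q t = q ^ 2 • (Yg q t * Xg q t * Tg q t * Tg q t) := by
  simpa [Xg, Yg, Tg] using RingQuot.mkAlgHom_rel ℂ (DahaRel.XY (q := q) (t := t))

lemma hecke_relation :
    (Tg q t - algebraMap ℂ (DAHA q t) t) * (Tg q t + algebraMap ℂ (DAHA q t) t⁻¹) = 0 := by
  simpa [Tg] using RingQuot.mkAlgHom_rel ℂ (DahaRel.hecke (q := q) (t := t))

lemma hecke_relation_swap :
    (Tg q t + algebraMap ℂ (DAHA q t) t⁻¹) * (Tg q t - algebraMap ℂ (DAHA q t) t) = 0 := by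
  have h_comm : Commute (Tg q t - algebraMap ℂ (DAHA q t) t)
      (Tg q t + algebraMap ℂ (DAHA q t) t⁻¹) :=
    ((Commute.refl _).sub_left (Algebra.commute_algebraMap_left t _)).add_right
      (Algebra.commute_algebraMap_right t⁻¹ _)
  rw [← h_comm.eq, hecke_relation]

lemma Yig_mul_Xg : Yig q t * Xg q t = q ^ 2 • (Xg q t * Tg q t * Tg q t * Yig q t) :=
  calc Yig q t * Xg q t = Yig q t * (Xg q t * Yg q t) * Yig q t := by
        rw [mul_assoc, mul_assoc, Yg_mul_Yig, mul_one]
    _ = _ := by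
        rw [Xg_mul_Yg]
        simp only [mul_smul_comm, smul_mul_assoc, ← mul_assoc, Yig_mul_Yg, one_mul]

lemma Xig_mul_Yig : Xig q t * Yig q t = q ^ 2 • (Tg q t * Tg q t * Yig q t * Xig q t) :=
  calc Xig q t * Yig q t = Xig q t * (Yig q t * Xg q t) * Xig q t := by
        rw [mul_assoc, mul_assoc, Xg_mul_Xig, mul_one]
    _ = _ := by
        rw [Yig_mul_Xg]
        simp only [mul_smul_comm, smul_mul_assoc, ← mul_assoc, Xig_mul_Xg, one_mul]

lemma algHom_ext {A : Type*} [Semiring A] [Algebra ℂ A] {f g : DAHA q t →ₐ[ℂ] A}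
    (hX : f (Xg q t) = g (Xg q t)) (hY : f (Yg q t) = g (Yg q t))
    (hT : f (Tg q t) = g (Tg q t)) : f = g := by
  have hXi : f (Xig q t) = g (Xig q t) :=
    left_inv_eq_right_inv (a := g (Xg q t))
      (by rw [← hX, ← map_mul, Xig_mul_Xg, map_one]) (by rw [← map_mul, Xg_mul_Xig, map_one])
  have hYi : f (Yig q t) = g (Yig q t) :=
    left_inv_eq_right_inv (a := g (Yg q t))
      (by rw [← hY, ← map_mul, Yig_mul_Yg, map_one]) (by rw [← map_mul, Yg_mul_Yig, map_one])
  refine RingQuot.ringQuot_ext' _ _ _ (FreeAlgebra.hom_ext (funext fun gen => ?_))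
  cases gen
  exacts [hX, hXi, hY, hYi, hT]

variable (q t) in
def antiGen : DGen → (DAHA q t)ᵐᵒᵖ
  | .X => op (Yig q t)
  | .Xi => op (Yg q t)
  | .Y => op (Xig q t)
  | .Yi => op (Xg q t)
  | .T => op (Tg q t)

lemma lift_antiGen_rel ⦃a b : FreeAlgebra ℂ DGen⦄ (h : DahaRel q t a b) :
    FreeAlgebra.lift ℂ (antiGen q t) a = FreeAlgebra.lift ℂ (antiGen q t) b := by
  apply unop_injective
  cases h <;> simp [antiGen, ← mul_assoc, Xg_mul_Xig, Xig_mul_Xg, Yg_mul_Yig, Yig_mul_Yg,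
    Tg_mul_Xg_mul_Tg, Tg_mul_Yig_mul_Tg, Xig_mul_Yig, hecke_relation_swap]

variable (q t) in
def antiHom : DAHA q t →ₐ[ℂ] (DAHA q t)ᵐᵒᵖ :=
  RingQuot.liftAlgHom ℂ ⟨FreeAlgebra.lift ℂ (antiGen q t), lift_antiGen_rel⟩

lemma antiHom_mkAlgHom_ι (g : DGen) :
    antiHom q t (RingQuot.mkAlgHom ℂ (DahaRel q t) (FreeAlgebra.ι ℂ g)) = antiGen q t g := by
  rw [antiHom, RingQuot.liftAlgHom_mkAlgHom_apply, FreeAlgebra.lift_ι_apply]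

variable (q t) in
def antiInvolution : DAHA q t →ₗ[ℂ] DAHA q t :=
  (opLinearEquiv ℂ).symm.toLinearMap ∘ₗ (antiHom q t).toLinearMap

lemma antiInvolution_apply (a : DAHA q t) : antiInvolution q t a = unop (antiHom q t a) :=
  rfl

lemma antiInvolution_one : antiInvolution q t 1 = 1 := by
  simp [antiInvolution_apply]

lemma antiInvolution_mul (a b : DAHA q t) :
    antiInvolution q t (a * b) = antiInvolution q t b * antiInvolution q t a := by
  simp [antiInvolution_apply]

lemma antiInvolution_Xg : antiInvolution q t (Xg q t) = Yig q t :=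
  congrArg unop (antiHom_mkAlgHom_ι .X)

lemma antiInvolution_Xig : antiInvolution q t (Xig q t) = Yg q t :=
  congrArg unop (antiHom_mkAlgHom_ι .Xi)

lemma antiInvolution_Yg : antiInvolution q t (Yg q t) = Xig q t :=
  congrArg unop (antiHom_mkAlgHom_ι .Y)

lemma antiInvolution_Yig : antiInvolution q t (Yig q t) = Xg q t :=
  congrArg unop (antiHom_mkAlgHom_ι .Yi)

lemma antiInvolution_Tg : antiInvolution q t (Tg q t) = Tg q t :=
  congrArg unop (antiHom_mkAlgHom_ι .T)

lemma antiInvolution_involutive : Function.Involutive (antiInvolution q t) := by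
  let ψ : DAHA q t →ₐ[ℂ] DAHA q t :=
    AlgHom.ofLinearMap (antiInvolution q t ∘ₗ antiInvolution q t)
      (by simp [antiInvolution_one]) (fun a b => by simp [antiInvolution_mul])
  have hψ : ψ = AlgHom.id ℂ (DAHA q t) :=
    algHom_ext (by simp [ψ, antiInvolution_Xg, antiInvolution_Yig])
      (by simp [ψ, antiInvolution_Yg, antiInvolution_Xig]) (by simp [ψ, antiInvolution_Tg])
  exact fun a => DFunLike.congr_fun hψ a

lemma eq_antiInvolution {φ : DAHA q t →ₗ[ℂ] DAHA q t} (h_one : φ 1 = 1)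
    (h_mul : ∀ a b, φ (a * b) = φ b * φ a) (hX : φ (Xg q t) = Yig q t)
    (hY : φ (Yg q t) = Xig q t) (hT : φ (Tg q t) = Tg q t) : φ = antiInvolution q t := by
  have h : φ.toOpAlgHom h_one h_mul =
      (antiInvolution q t).toOpAlgHom antiInvolution_one antiInvolution_mul :=
    algHom_ext (by simp [hX, antiInvolution_Xg]) (by simp [hY, antiInvolution_Yg])
      (by simp [hT, antiInvolution_Tg])
  exact LinearMap.ext fun a => congrArg unop (DFunLike.congr_fun h a)

end DAHA

theorem daha_antiautomorphism_general (q t : ℂ) :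
    ∃! φ : DAHA q t →ₗ[ℂ] DAHA q t,
      Function.Bijective φ ∧ φ 1 = 1 ∧
      (∀ a b : DAHA q t, φ (a * b) = φ b * φ a) ∧
      φ (Xg q t) = Yig q t ∧ φ (Yg q t) = Xig q t ∧ φ (Tg q t) = Tg q t := by
  refine ⟨DAHA.antiInvolution q t, ⟨DAHA.antiInvolution_involutive.bijective,
    DAHA.antiInvolution_one, DAHA.antiInvolution_mul, DAHA.antiInvolution_Xg,
    DAHA.antiInvolution_Yg, DAHA.antiInvolution_Tg⟩, ?_⟩
  rintro φ ⟨-, h_one, h_mul, hX, hY, hT⟩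
  exact DAHA.eq_antiInvolution h_one h_mul hX hY hT

/-- The assignments `φ(X) = Y⁻¹`, `φ(Y) = X⁻¹`, `φ(T) = T` extend uniquely to a ℂ-linear
anti-automorphism of `H_{q,t}`: a ℂ-linear bijection with `φ(1) = 1` and
`φ(a·b) = φ(b)·φ(a)`. -/
theorem daha_antiautomorphism (q t : ℂ) (hq : q ≠ 0) (ht : t ≠ 0) :
    ∃! φ : DAHA q t →ₗ[ℂ] DAHA q t,
      Function.Bijective φ ∧ φ 1 = 1 ∧
      (∀ a b : DAHA q t, φ (a * b) = φ b * φ a) ∧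
      φ (Xg q t) = Yig q t ∧ φ (Yg q t) = Xig q t ∧ φ (Tg q t) = Tg q t :=
  daha_antiautomorphism_general q t
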